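/- arXiv:math/0608140 — 2 statements merged into one kernel-verified Lean document; each statement's English description precedes it below -/
import Mathlib

section
/- For every dimension d ≥ 1, setting k = (3^d − 1)/2, there exists a real number L such that both β_k(T^(d)[n])/n^d → L and h(K^(d)[n])/n^d → L as n → ∞; that is, the k-dependent toroidal limiting density τ_k^(d) equals the half-dependent limiting density ρ^(d). -/
open Filter Topology

/-- The `d`-dimensional kings graph on `Fin (n 0) × ⋯ × Fin (n (d-1))`:
distinct vertices are adjacent iff their coordinates differ by at most 1. -/
def kingsGraph (d : ℕ) (n : Fin d → ℕ) :
    SimpleGraph (∀ i : Fin d, Fin (n i)) where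
  Adj u v := u ≠ v ∧ ∀ i, |((v i : ℤ)) - (u i : ℤ)| ≤ 1
  symm := by
    constructor
    rintro u v ⟨h1, h2⟩
    exact ⟨h1.symm, fun i => by rw [abs_sub_comm]; exact h2 i⟩
  loopless := by constructor; intro v h; exact h.1 rfl

/-- The `d`-dimensional toroidal kings graph on `ZMod (n 0) × ⋯ × ZMod (n (d-1))`:
distinct vertices are adjacent iff each coordinate difference is `-1`, `0` or `1`. -/
def torusGraph (d : ℕ) (n : Fin d → ℕ) :
    SimpleGraph (∀ i : Fin d, ZMod (n i)) where
  Adj u v := u ≠ v ∧ ∀ i, v i - u i = -1 ∨ v i - u i = 0 ∨ v i - u i = 1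
  symm := by
    constructor
    rintro u v ⟨h1, h2⟩
    refine ⟨h1.symm, fun i => ?_⟩
    rcases h2 i with h | h | h
    · right; right; rw [show u i - v i = -(v i - u i) by ring, h]; norm_num
    · right; left; rw [show u i - v i = -(v i - u i) by ring, h]; norm_num
    · left; rw [show u i - v i = -(v i - u i) by ring, h]
  loopless := by constructor; intro v h; exact h.1 rfl

/-- A set `S` of vertices is `k`-dependent if every vertex of `S`
has at most `k` neighbors in `S`. -/
def IsKDependent {V : Type*} (G : SimpleGraph V) (k : ℕ) (S : Set V) : Prop :=
  ∀ v ∈ S, (S ∩ G.neighborSet v).ncard ≤ k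

/-- `betaK G k` is the maximum cardinality of a `k`-dependent set in `G`. -/
noncomputable def betaK {V : Type*} (G : SimpleGraph V) (k : ℕ) : ℕ :=
  sSup {m | ∃ S : Set V, IsKDependent G k S ∧ S.ncard = m}

/-- A set `S` of vertices is half-dependent if every vertex `v ∈ S`
has at most `|N(v)|/2` neighbors in `S`. -/
def IsHalfDependent {V : Type*} (G : SimpleGraph V) (S : Set V) : Prop :=
  ∀ v ∈ S, 2 * (S ∩ G.neighborSet v).ncard ≤ (G.neighborSet v).ncard

/-- `halfNum G` is the maximum cardinality of a half-dependent set in `G`. -/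
noncomputable def halfNum {V : Type*} (G : SimpleGraph V) : ℕ :=
  sSup {m | ∃ S : Set V, IsHalfDependent G S ∧ S.ncard = m}

/-- A graph is vertex-transitive if any vertex can be mapped to any other
by a graph automorphism. -/
def IsVertexTransitive {V : Type*} (G : SimpleGraph V) : Prop :=
  ∀ u v : V, ∃ f : G ≃g G, f u = v

/-!
Put `k = (3 ^ d - 1) / 2`. No vertex of a kings graph has more than `2 k` neighbours, and interior
vertices have exactly `2 k`. The coordinatewise inclusion `K[n] → T[n + 1]` and the shift
`T[n + 1] → K[n + 3]` into the interior both reflect adjacency, so they carry half-dependent sets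
to `k`-dependent ones and back: `h(K[n]) ≤ β_k(T[n + 1]) ≤ h(K[n + 3])`.

The limit of `h(K[n]) / n ^ d` exists because `q ^ d` pairwise non-adjacent copies of `K[n]`,
separated by gaps of width one, fit into `K[m]` whenever `q (n + 1) ≤ m + 1`; hence
`h(K[m]) / (m + 1) ^ d` tends to its supremum, and the sandwich gives the same limit for the torus.
-/

open Function

variable {V W : Type*}

section Extremal

variable [Finite V] {P : Set V → Prop}

lemma exists_ncard_eq_sSup (h0 : P ∅) :
    ∃ S, P S ∧ S.ncard = sSup {m | ∃ S, P S ∧ S.ncard = m} :=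
  Nat.sSup_mem (s := {m | ∃ S, P S ∧ S.ncard = m}) ⟨0, ∅, h0, Set.ncard_empty V⟩
    ⟨Nat.card V, by rintro _ ⟨S, -, rfl⟩; exact S.ncard_le_card⟩

lemma ncard_le_sSup {S : Set V} (hS : P S) : S.ncard ≤ sSup {m | ∃ S, P S ∧ S.ncard = m} :=
  le_csSup ⟨Nat.card V, by rintro _ ⟨S, -, rfl⟩; exact S.ncard_le_card⟩ ⟨S, hS, rfl⟩

variable (G : SimpleGraph V)

lemma exists_isKDependent_ncard_eq_betaK (k : ℕ) :
    ∃ S, IsKDependent G k S ∧ S.ncard = betaK G k :=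
  exists_ncard_eq_sSup fun _ h => h.elim

lemma exists_isHalfDependent_ncard_eq_halfNum :
    ∃ S, IsHalfDependent G S ∧ S.ncard = halfNum G :=
  exists_ncard_eq_sSup fun _ h => h.elim

lemma halfNum_le_card : halfNum G ≤ Nat.card V := by
  obtain ⟨S, -, hS⟩ := exists_isHalfDependent_ncard_eq_halfNum G
  exact hS ▸ S.ncard_le_card

variable {G}

lemma IsKDependent.ncard_le_betaK {k : ℕ} {S : Set V} (hS : IsKDependent G k S) :
    S.ncard ≤ betaK G k :=
  ncard_le_sSup hS

lemma IsHalfDependent.ncard_le_halfNum {S : Set V} (hS : IsHalfDependent G S) :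
    S.ncard ≤ halfNum G :=
  ncard_le_sSup hS

end Extremal

section Transfer

variable [Finite V] {G : SimpleGraph V} {H : SimpleGraph W} {f : V → W}

lemma ncard_image_inter_neighborSet_le (hf : Injective f) (hfG : H.comap f ≤ G) (S : Set V)
    (v : V) : (f '' S ∩ H.neighborSet (f v)).ncard ≤ (S ∩ G.neighborSet v).ncard := by
  calc (f '' S ∩ H.neighborSet (f v)).ncard ≤ (f '' (S ∩ G.neighborSet v)).ncard := by
        refine Set.ncard_le_ncard ?_ (Set.toFinite _)
        rintro _ ⟨⟨u, hu, rfl⟩, huv⟩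
        exact ⟨u, ⟨hu, hfG huv⟩, rfl⟩
    _ = (S ∩ G.neighborSet v).ncard := Set.ncard_image_of_injective _ hf

lemma IsHalfDependent.isKDependent_image {k : ℕ} (hf : Injective f) (hfG : H.comap f ≤ G)
    (hdeg : ∀ v, (G.neighborSet v).ncard ≤ 2 * k) {S : Set V} (hS : IsHalfDependent G S) :
    IsKDependent H k (f '' S) := by
  rintro _ ⟨v, hv, rfl⟩
  have := ncard_image_inter_neighborSet_le hf hfG S v
  have := hS v hv
  have := hdeg v
  omega

lemma IsKDependent.isHalfDependent_image {k : ℕ} (hf : Injective f) (hfG : H.comap f ≤ G)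
    (hdeg : ∀ v, 2 * k ≤ (H.neighborSet (f v)).ncard) {S : Set V} (hS : IsKDependent G k S) :
    IsHalfDependent H (f '' S) := by
  rintro _ ⟨v, hv, rfl⟩
  have := ncard_image_inter_neighborSet_le hf hfG S v
  have := hS v hv
  have := hdeg v
  omega

lemma halfNum_le_betaK_of_comap_le [Finite W] {k : ℕ} (hf : Injective f) (hfG : H.comap f ≤ G)
    (hdeg : ∀ v, (G.neighborSet v).ncard ≤ 2 * k) : halfNum G ≤ betaK H k := by
  obtain ⟨S, hS, hcard⟩ := exists_isHalfDependent_ncard_eq_halfNum G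
  rw [← hcard, ← Set.ncard_image_of_injective S hf]
  exact (hS.isKDependent_image hf hfG hdeg).ncard_le_betaK

lemma betaK_le_halfNum_of_comap_le [Finite W] {k : ℕ} (hf : Injective f) (hfG : H.comap f ≤ G)
    (hdeg : ∀ v, 2 * k ≤ (H.neighborSet (f v)).ncard) : betaK G k ≤ halfNum H := by
  obtain ⟨S, hS, hcard⟩ := exists_isKDependent_ncard_eq_betaK G k
  rw [← hcard, ← Set.ncard_image_of_injective S hf]
  exact (hS.isHalfDependent_image hf hfG hdeg).ncard_le_halfNum

lemma IsHalfDependent.image [Finite W] (f : G ↪g H) {S : Set V} (hS : IsHalfDependent G S) :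
    IsHalfDependent H (f '' S) := by
  rintro _ ⟨v, hv, rfl⟩
  calc 2 * (f '' S ∩ H.neighborSet (f v)).ncard ≤ 2 * (S ∩ G.neighborSet v).ncard := by
        gcongr
        exact ncard_image_inter_neighborSet_le f.injective (fun _ _ => f.map_adj_iff.1) S v
    _ ≤ (G.neighborSet v).ncard := hS v hv
    _ ≤ (H.neighborSet (f v)).ncard := by
        simpa only [Nat.card_coe_set_eq] using
          Nat.card_le_card_of_injective _ (f.mapNeighborSet v).injective

lemma halfNum_le_of_embedding [Finite W] (f : G ↪g H) : halfNum G ≤ halfNum H := by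
  obtain ⟨S, hS, hcard⟩ := exists_isHalfDependent_ncard_eq_halfNum G
  rw [← hcard, ← Set.ncard_image_of_injective S f.injective]
  exact (hS.image f).ncard_le_halfNum

end Transfer

section DisjointCopies

variable {ι : Type*} {G : SimpleGraph V}

lemma boxProd_bot_neighborSet (i : ι) (v : V) :
    ((⊥ : SimpleGraph ι) □ G).neighborSet (i, v) = {i} ×ˢ G.neighborSet v := by
  ext ⟨j, u⟩
  simp [SimpleGraph.boxProd_adj, eq_comm, and_comm]

lemma IsHalfDependent.univ_prod {S : Set V} (hS : IsHalfDependent G S) :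
    IsHalfDependent ((⊥ : SimpleGraph ι) □ G) (Set.univ ×ˢ S) := by
  rintro ⟨i, v⟩ ⟨-, hv⟩
  rw [boxProd_bot_neighborSet, Set.prod_inter_prod, Set.univ_inter, Set.ncard_prod,
    Set.ncard_prod, Set.ncard_singleton, one_mul, one_mul]
  exact hS v hv

lemma card_mul_halfNum_le_halfNum_boxProd_bot [Finite ι] [Finite V] (G : SimpleGraph V) :
    Nat.card ι * halfNum G ≤ halfNum ((⊥ : SimpleGraph ι) □ G) := by
  obtain ⟨S, hS, hcard⟩ := exists_isHalfDependent_ncard_eq_halfNum G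
  rw [← hcard, ← Set.ncard_univ, ← Set.ncard_prod]
  exact hS.univ_prod.ncard_le_halfNum

end DisjointCopies

section KingsGraph

def Fin.closedNbhd {n : ℕ} (a : Fin n) : Finset (Fin n) :=
  Finset.univ.filter fun x => |(x : ℤ) - a| ≤ 1

lemma Fin.card_closedNbhd_le {n : ℕ} (a : Fin n) : a.closedNbhd.card ≤ 3 := by
  calc _ ≤ (Finset.Icc ((a : ℕ) - 1) (a + 1)).card := by
        refine Finset.card_le_card_of_injOn Fin.val (fun x hx => ?_) Fin.val_injective.injOn
        simp only [closedNbhd, Finset.mem_coe, Finset.mem_filter, Finset.mem_univ, true_and,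
          abs_le] at hx
        simp only [Finset.coe_Icc, Set.mem_Icc]
        omega
    _ ≤ 3 := by simp; omega

lemma Fin.card_closedNbhd_of_interior {n : ℕ} (a : Fin n) (ha : 1 ≤ (a : ℕ))
    (ha' : (a : ℕ) + 1 < n) : a.closedNbhd.card = 3 := by
  refine le_antisymm a.card_closedNbhd_le ?_
  calc 3 = (Finset.univ : Finset (Fin 3)).card := rfl
    _ ≤ _ := by
        refine Finset.card_le_card_of_injOn (fun j => ⟨(a : ℕ) + j - 1, by omega⟩)
          (fun j _ => ?_) ?_
        · simp only [closedNbhd, Finset.mem_coe, Finset.mem_filter, Finset.mem_univ, true_and,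
            abs_le]
          omega
        · intro j _ j' _ h
          simp only [Fin.mk.injEq] at h
          omega

variable {d : ℕ}

lemma kingsGraph_ncard_neighborSet {n : Fin d → ℕ} (v : ∀ i, Fin (n i)) :
    ((kingsGraph d n).neighborSet v).ncard = ∏ i, (v i).closedNbhd.card - 1 := by
  have hbox : insert v ((kingsGraph d n).neighborSet v) =
      ↑(Fintype.piFinset fun i => (v i).closedNbhd) := by
    ext u
    by_cases huv : u = v
    · simp [huv, Fin.closedNbhd]
    · simp [huv, kingsGraph, Fin.closedNbhd, Ne.symm huv]
  rw [← Fintype.card_piFinset, ← Set.ncard_coe_finset, ← hbox,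
    Set.ncard_insert_of_notMem ((kingsGraph d n).notMem_neighborSet_self), Nat.add_sub_cancel]

lemma kingsGraph_ncard_neighborSet_le {n : Fin d → ℕ} (v : ∀ i, Fin (n i)) :
    ((kingsGraph d n).neighborSet v).ncard ≤ 3 ^ d - 1 := by
  rw [kingsGraph_ncard_neighborSet]
  gcongr
  simpa using Finset.prod_le_pow_card Finset.univ _ 3 fun i _ => (v i).card_closedNbhd_le

lemma kingsGraph_ncard_neighborSet_of_interior {n : Fin d → ℕ} (v : ∀ i, Fin (n i))
    (hv : ∀ i, 1 ≤ (v i : ℕ) ∧ (v i : ℕ) + 1 < n i) :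
    ((kingsGraph d n).neighborSet v).ncard = 3 ^ d - 1 := by
  rw [kingsGraph_ncard_neighborSet]
  simp [Fin.card_closedNbhd_of_interior _ (hv _).1 (hv _).2]

end KingsGraph

section Coordinates

lemma ZMod.sub_eq_of_intCast_sub_eq {m : ℕ} {a b c : ℤ} (h : (b : ZMod m) - a = c)
    (hlt : |b - a - c| < m) : b - a = c := by
  have hdvd : (m : ℤ) ∣ b - a - c :=
    (ZMod.intCast_zmod_eq_zero_iff_dvd _ m).1 (by push_cast; rw [h, sub_self])
  linarith [Int.eq_zero_of_abs_lt_dvd hdvd hlt]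

lemma abs_sub_le_one_of_intCast_sub {m : ℕ} {a b : ℤ} (hab : |b - a| + 2 ≤ m)
    (h : (b : ZMod m) - a = -1 ∨ (b : ZMod m) - a = 0 ∨ (b : ZMod m) - a = 1) :
    |b - a| ≤ 1 := by
  obtain ⟨c, hc, hbac⟩ : ∃ c : ℤ, |c| ≤ 1 ∧ (b : ZMod m) - a = c := by
    rcases h with h | h | h
    exacts [⟨-1, by norm_num, by simpa⟩, ⟨0, by norm_num, by simpa⟩,
      ⟨1, by norm_num, by simpa⟩]
  have hlt : |b - a - c| < m := by linarith [abs_sub (b - a) c]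
  rwa [ZMod.sub_eq_of_intCast_sub_eq hbac hlt]

lemma intCast_sub_of_abs_sub_le_one {m : ℕ} {a b : ℤ} (h : |b - a| ≤ 1) :
    (b : ZMod m) - a = -1 ∨ (b : ZMod m) - a = 0 ∨ (b : ZMod m) - a = 1 := by
  rw [abs_le] at h
  rw [← Int.cast_sub]
  rcases (by omega : b - a = -1 ∨ b - a = 0 ∨ b - a = 1) with h | h | h <;> simp [h]

end Coordinates

lemma two_mul_div_two_three_pow_sub_one (d : ℕ) : 2 * ((3 ^ d - 1) / 2) = 3 ^ d - 1 :=
  Nat.two_mul_div_two_of_even (Nat.Odd.sub_odd (Odd.pow (by decide)) odd_one)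

section Comparison

variable {d : ℕ} (n : Fin d → ℕ)

lemma halfNum_kingsGraph_le_betaK_torusGraph :
    halfNum (kingsGraph d n) ≤ betaK (torusGraph d fun i => n i + 1) ((3 ^ d - 1) / 2) := by
  let φ : (∀ i, Fin (n i)) → ∀ i, ZMod (n i + 1) := fun u i => ((u i : ℕ) : ZMod (n i + 1))
  refine halfNum_le_betaK_of_comap_le (f := φ) (fun u v huv => ?_) ?_ fun v => ?_
  · funext i
    apply Fin.ext
    simpa [φ, ZMod.val_natCast_of_lt (Nat.lt_succ_of_lt (u i).isLt),
      ZMod.val_natCast_of_lt (Nat.lt_succ_of_lt (v i).isLt)] using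
      congrArg ZMod.val (congrFun huv i)
  · rintro u v ⟨huv, hadj⟩
    refine ⟨fun h => huv (h ▸ rfl),
      fun i => abs_sub_le_one_of_intCast_sub ?_ (by simpa using hadj i)⟩
    have := (u i).isLt
    have := (v i).isLt
    have : |((v i : ℤ)) - (u i : ℤ)| ≤ n i - 1 := abs_sub_le_iff.2 ⟨by omega, by omega⟩
    push_cast
    linarith
  · rw [two_mul_div_two_three_pow_sub_one]
    exact kingsGraph_ncard_neighborSet_le v

lemma betaK_torusGraph_le_halfNum_kingsGraph :
    betaK (torusGraph d fun i => n i + 1) ((3 ^ d - 1) / 2) ≤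
      halfNum (kingsGraph d fun i => n i + 3) := by
  let ψ : (∀ i, ZMod (n i + 1)) → ∀ i, Fin (n i + 3) :=
    fun w i => ⟨(w i).val + 1, by have := (w i).val_lt; omega⟩
  refine betaK_le_halfNum_of_comap_le (f := ψ) (fun u v huv => ?_) ?_ fun w => ?_
  · funext i
    have := congrArg Fin.val (congrFun huv i)
    exact ZMod.val_injective _ (by simpa [ψ] using this)
  · rintro u v ⟨huv, hadj⟩
    refine ⟨fun h => huv (h ▸ rfl), fun i => ?_⟩
    have h := intCast_sub_of_abs_sub_le_one (m := n i + 1) (a := (u i).val) (b := (v i).val)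
      (by simpa only [ψ, Nat.cast_add, Nat.cast_one, add_sub_add_right_eq_sub] using hadj i)
    simpa only [Int.cast_natCast, ZMod.natCast_zmod_val] using h
  · rw [two_mul_div_two_three_pow_sub_one, kingsGraph_ncard_neighborSet_of_interior]
    intro i
    have := (w i).val_lt
    simp only [ψ]
    omega

end Comparison

section Packing

lemma mul_succ_add_lt {Q N M j x : ℕ} (hj : j < Q) (hx : x < N) (h : Q * (N + 1) ≤ M + 1) :
    j * (N + 1) + x < M := by
  nlinarith

lemma eq_of_abs_mul_succ_add_sub_le_one {N a b x y : ℕ} (hx : x < N) (hy : y < N)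
    (h : |((b * (N + 1) + y : ℕ) : ℤ) - (a * (N + 1) + x : ℕ)| ≤ 1) : a = b := by
  rw [abs_le] at h
  push_cast at h
  rcases Nat.lt_trichotomy a b with hab | rfl | hab
  · have : (a : ℤ) + 1 ≤ b := by exact_mod_cast hab
    nlinarith
  · rfl
  · have : (b : ℤ) + 1 ≤ a := by exact_mod_cast hab
    nlinarith

variable {d : ℕ} {q n m : Fin d → ℕ}

/-- Consecutive blocks are separated by a gap of width one, so distinct copies are
non-adjacent. -/
def kingsGraph.blockMap (hqm : ∀ i, q i * (n i + 1) ≤ m i + 1)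
    (p : (∀ i, Fin (q i)) × ∀ i, Fin (n i)) : ∀ i, Fin (m i) :=
  fun i => ⟨p.1 i * (n i + 1) + p.2 i, mul_succ_add_lt (p.1 i).isLt (p.2 i).isLt (hqm i)⟩

variable (hqm : ∀ i, q i * (n i + 1) ≤ m i + 1)

lemma kingsGraph.abs_blockMap_sub_le_one_iff {j j' : ∀ i, Fin (q i)} {u v : ∀ i, Fin (n i)} :
    (∀ i, |((blockMap hqm (j', v) i : ℕ) : ℤ) - (blockMap hqm (j, u) i : ℕ)| ≤ 1) ↔
      j = j' ∧ ∀ i, |((v i : ℕ) : ℤ) - (u i : ℕ)| ≤ 1 := by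
  refine ⟨fun h => ?_, ?_⟩
  · obtain rfl : j = j' := funext fun i =>
      Fin.ext (eq_of_abs_mul_succ_add_sub_le_one (u i).isLt (v i).isLt (h i))
    exact ⟨rfl, fun i => by simpa [blockMap] using h i⟩
  · rintro ⟨rfl, h⟩ i
    simpa [blockMap] using h i

lemma kingsGraph.blockMap_injective : Injective (blockMap hqm) := by
  rintro ⟨j, u⟩ ⟨j', v⟩ h
  obtain ⟨rfl, -⟩ := (abs_blockMap_sub_le_one_iff hqm (j := j) (j' := j') (u := u) (v := v)).1
    fun i => by rw [h]; simp
  exact Prod.ext rfl <| funext fun i => Fin.ext <| by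
    simpa [blockMap] using congrArg Fin.val (congrFun h i)

lemma kingsGraph.blockMap_adj_iff {p p' : (∀ i, Fin (q i)) × ∀ i, Fin (n i)} :
    (kingsGraph d m).Adj (blockMap hqm p) (blockMap hqm p') ↔
      ((⊥ : SimpleGraph (∀ i, Fin (q i))) □ kingsGraph d n).Adj p p' := by
  obtain ⟨j, u⟩ := p
  obtain ⟨j', v⟩ := p'
  simp only [kingsGraph, abs_blockMap_sub_le_one_iff, (blockMap_injective hqm).ne_iff,
    SimpleGraph.boxProd_adj, SimpleGraph.bot_adj, false_and, false_or, ne_eq, Prod.mk.injEq]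
  tauto

def kingsGraph.blockEmbedding :
    ((⊥ : SimpleGraph (∀ i, Fin (q i))) □ kingsGraph d n) ↪g kingsGraph d m where
  toFun := blockMap hqm
  inj' := blockMap_injective hqm
  map_rel_iff' := blockMap_adj_iff hqm

end Packing

lemma prod_mul_halfNum_kingsGraph_le {d : ℕ} {q n m : Fin d → ℕ}
    (hqm : ∀ i, q i * (n i + 1) ≤ m i + 1) :
    (∏ i, q i) * halfNum (kingsGraph d n) ≤ halfNum (kingsGraph d m) :=
  calc (∏ i, q i) * halfNum (kingsGraph d n)
      = Nat.card (∀ i, Fin (q i)) * halfNum (kingsGraph d n) := by simp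
    _ ≤ halfNum ((⊥ : SimpleGraph (∀ i, Fin (q i))) □ kingsGraph d n) :=
      card_mul_halfNum_le_halfNum_boxProd_bot _
    _ ≤ halfNum (kingsGraph d m) := halfNum_le_of_embedding (kingsGraph.blockEmbedding hqm)

section Limits

lemma tendsto_natCast_add_div_natCast_add (a b : ℕ) :
    Tendsto (fun m : ℕ => ((m : ℝ) + a) / ((m : ℝ) + b)) atTop (𝓝 1) := by
  have h := (tendsto_natCast_div_add_atTop (b : ℝ)).div (tendsto_natCast_div_add_atTop (a : ℝ))
    one_ne_zero
  rw [div_one] at h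
  refine h.congr' ?_
  filter_upwards [eventually_gt_atTop 0] with m hm
  simp only [Pi.div_apply]
  field_simp

lemma tendsto_div_succ_pow_iSup {g : ℕ → ℝ} {d : ℕ}
    (hbdd : BddAbove (Set.range fun n : ℕ => g n / ((n : ℝ) + 1) ^ d))
    (hpack : ∀ n q m : ℕ, q * (n + 1) ≤ m + 1 → (q : ℝ) ^ d * g n ≤ g m) :
    Tendsto (fun m : ℕ => g m / ((m : ℝ) + 1) ^ d) atTop
      (𝓝 (⨆ n : ℕ, g n / ((n : ℝ) + 1) ^ d)) := by
  refine tendsto_order.2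
    ⟨fun a ha => ?_, fun b hb => .of_forall fun m => (le_ciSup hbdd m).trans_lt hb⟩
  obtain ⟨n, hn⟩ := exists_lt_of_lt_ciSup ha
  have hfloor : Tendsto (fun m : ℕ => (((m + 1) / (n + 1) : ℕ) : ℝ) / ((m : ℝ) + 1)) atTop
      (𝓝 ((n : ℝ) + 1)⁻¹) := by
    refine ((tendsto_nat_floor_mul_div_atTop (by positivity)).comp
      (tendsto_natCast_atTop_atTop.comp (tendsto_add_atTop_nat 1))).congr fun m => ?_
    simp [← Nat.floor_div_eq_div (K := ℝ), inv_mul_eq_div]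
  have hlim :
      Tendsto (fun m : ℕ => g n * ((((m + 1) / (n + 1) : ℕ) : ℝ) / ((m : ℝ) + 1)) ^ d) atTop
        (𝓝 (g n / ((n : ℝ) + 1) ^ d)) := by
    simpa [div_eq_mul_inv, inv_pow] using (hfloor.pow d).const_mul (g n)
  filter_upwards [hlim.eventually (lt_mem_nhds hn)] with m hm
  refine hm.trans_le ?_
  rw [div_pow, mul_div_assoc', mul_comm]
  gcongr
  exact hpack n _ m (Nat.div_mul_le_self _ _)

lemma tendsto_div_pow_shift {g : ℕ → ℝ} {d : ℕ} {L : ℝ}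
    (h : Tendsto (fun m : ℕ => g m / ((m : ℝ) + 1) ^ d) atTop (𝓝 L)) (c e : ℕ) :
    Tendsto (fun m : ℕ => g (m + c) / ((m : ℝ) + e) ^ d) atTop (𝓝 L) := by
  have h' := (h.comp (tendsto_add_atTop_nat c)).mul
    ((tendsto_natCast_add_div_natCast_add (c + 1) e).pow d)
  rw [one_pow, mul_one] at h'
  refine h'.congr' ?_
  filter_upwards [eventually_gt_atTop 0] with m hm
  simp only [Function.comp_apply, Nat.cast_add, Nat.cast_one, div_pow]
  field_simp
  ring

end Limits

lemma tendsto_halfNum_kingsGraph_div_succ_pow (d : ℕ) :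
    Tendsto (fun m : ℕ => (halfNum (kingsGraph d fun _ => m) : ℝ) / ((m : ℝ) + 1) ^ d) atTop
      (𝓝 (⨆ n : ℕ, (halfNum (kingsGraph d fun _ => n) : ℝ) / ((n : ℝ) + 1) ^ d)) := by
  refine tendsto_div_succ_pow_iSup ⟨1, ?_⟩ fun n q m h => ?_
  · rintro _ ⟨n, rfl⟩
    have hcard : halfNum (kingsGraph d fun _ => n) ≤ n ^ d := by
      simpa using halfNum_le_card (kingsGraph d fun _ => n)
    rw [div_le_one (by positivity)]
    calc (halfNum (kingsGraph d fun _ => n) : ℝ) ≤ (n : ℝ) ^ d := by exact_mod_cast hcard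
      _ ≤ ((n : ℝ) + 1) ^ d := by gcongr; linarith
  · have := prod_mul_halfNum_kingsGraph_le (d := d) (q := fun _ => q) (n := fun _ => n)
      (m := fun _ => m) fun _ => h
    simp only [Finset.prod_const, Finset.card_univ, Fintype.card_fin] at this
    exact_mod_cast this

theorem stmt_4_general (d : ℕ) :
    ∃ L : ℝ,
      Filter.Tendsto
        (fun n : ℕ =>
          (betaK (torusGraph d (fun _ => n)) ((3 ^ d - 1) / 2) : ℝ) / (n : ℝ) ^ d)
        Filter.atTop (nhds L) ∧
      Filter.Tendsto
        (fun n : ℕ => (halfNum (kingsGraph d (fun _ => n)) : ℝ) / (n : ℝ) ^ d)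
        Filter.atTop (nhds L) := by
  have hL := tendsto_halfNum_kingsGraph_div_succ_pow d
  refine ⟨_, ?_, by simpa using tendsto_div_pow_shift hL 0 0⟩
  rw [← tendsto_add_atTop_iff_nat 1]
  refine tendsto_of_tendsto_of_tendsto_of_le_of_le hL (tendsto_div_pow_shift hL 3 1)
    (fun m => ?_) (fun m => ?_)
  · simp only [Nat.cast_add, Nat.cast_one]
    gcongr
    exact halfNum_kingsGraph_le_betaK_torusGraph fun _ => m
  · simp only [Nat.cast_add, Nat.cast_one]
    gcongr
    exact betaK_torusGraph_le_halfNum_kingsGraph fun _ => m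

/-- for k = (3^d−1)/2, the toroidal k-dependent limiting density equals
the half-dependent limiting density. -/
theorem stmt_4 (d : ℕ) (hd : 1 ≤ d) :
    ∃ L : ℝ,
      Filter.Tendsto
        (fun n : ℕ =>
          (betaK (torusGraph d (fun _ => n)) ((3 ^ d - 1) / 2) : ℝ) / (n : ℝ) ^ d)
        Filter.atTop (nhds L) ∧
      Filter.Tendsto
        (fun n : ℕ => (halfNum (kingsGraph d (fun _ => n)) : ℝ) / (n : ℝ) ^ d)
        Filter.atTop (nhds L) :=
  stmt_4_general d
end

section
/- The limit inferior as n → ∞ of β_5(T^(2)[n])/n² is at least 9/13; that is, the 5-dependent limiting density τ_5^(2) for two-dimensional toroidal kings graphs is at least 9/13. -/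
open Filter Topology

/-!
Colour the cell `(x, y)` by `x + 5y mod 13` and keep the nine colours `{0,1,2,3,4,5,6,8,11}`.
The eight king moves shift the colour by `±1, ±4, ±5, ±6`, and from every kept colour at most
five of these shifts land on a kept colour, so the pattern is 5-dependent of density `9/13`.
On a block of side `m = 13 ⌊(n - 1)/13⌋ < n` of the torus no adjacency wraps around, so the
block is 5-dependent in `T[n, n]`, and it has `117 ⌊(n - 1)/13⌋² ≥ (9/13) (n - 13)²` vertices.
-/

theorem le_betaK_of_isKDependent {V : Type*} [Finite V] {G : SimpleGraph V} {k : ℕ}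
    {S : Set V} (hS : IsKDependent G k S) : S.ncard ≤ betaK G k :=
  le_csSup ⟨Nat.card V, by rintro _ ⟨T, -, rfl⟩; exact T.ncard_le_card⟩ ⟨S, hS, rfl⟩

theorem betaK_le_card {V : Type*} [Finite V] (G : SimpleGraph V) (k : ℕ) :
    betaK G k ≤ Nat.card V :=
  csSup_le ⟨0, ∅, fun _ hv => hv.elim, Set.ncard_empty V⟩
    (by rintro _ ⟨T, -, rfl⟩; exact T.ncard_le_card)

theorem Nat.count_mul_of_periodic {p : ℕ → Prop} [DecidablePred p] {k : ℕ}
    (hp : Function.Periodic p k) (a : ℕ) : count p (k * a) = a * count p k := by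
  induction a with
  | zero => simp
  | succ a ih =>
    have hshift (j : ℕ) : p (k * a + j) ↔ p j := by
      rw [add_comm, mul_comm, ← Nat.cast_id a, hp.nat_mul a j]
    simp only [Nat.mul_succ, count_add, ih, hshift, Nat.succ_mul]

theorem ZMod.abs_val_sub_val_le_one {n : ℕ} {x y : ZMod n} (hx : x.val + 1 < n)
    (hy : y.val + 1 < n) (h : y - x = -1 ∨ y - x = 0 ∨ y - x = 1) :
    |(y.val : ℤ) - x.val| ≤ 1 := by
  have : NeZero n := ⟨by omega⟩
  obtain ⟨c, hc, hyx⟩ : ∃ c : ℤ, |c| ≤ 1 ∧ y - x = c := by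
    rcases h with h | h | h
    exacts [⟨-1, by norm_num, by simp [h]⟩, ⟨0, by norm_num, by simp [h]⟩,
      ⟨1, by norm_num, by simp [h]⟩]
  have hdvd : (n : ℤ) ∣ (y.val : ℤ) - x.val - c := by
    rw [← ZMod.intCast_zmod_eq_zero_iff_dvd]
    push_cast
    rw [ZMod.natCast_zmod_val, ZMod.natCast_zmod_val, hyx, sub_self]
  have hzero := Int.eq_zero_of_abs_lt_dvd hdvd (by rw [abs_le] at hc; rw [abs_lt]; omega)
  rw [abs_le] at hc ⊢
  omega

theorem le_liminf_of_tendsto_of_eventually_le {α β : Type*}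
    [ConditionallyCompleteLinearOrder β] [TopologicalSpace β] [OrderTopology β]
    {f : Filter α} [f.NeBot] {u v : α → β} {b : β} (hu : Tendsto u f (𝓝 b))
    (huv : u ≤ᶠ[f] v) (hv : IsBoundedUnder (· ≤ ·) f v) : b ≤ liminf v f :=
  hu.liminf_eq ▸ liminf_le_liminf huv hu.isBoundedUnder_ge hv.isCoboundedUnder_ge

def diagColour (p : ℕ × ℕ) : ZMod 13 := p.1 + 5 * p.2

def diagPattern : Finset (ZMod 13) := {0, 1, 2, 3, 4, 5, 6, 8, 11}

def kingMoves : Finset (ℤ × ℤ) := ({-1, 0, 1} ×ˢ {-1, 0, 1} : Finset (ℤ × ℤ)).erase 0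

theorem card_kingMoves_filter_le {r : ZMod 13} (hr : r ∈ diagPattern) :
    (kingMoves.filter fun δ => r + δ.1 + 5 * δ.2 ∈ diagPattern).card ≤ 5 := by
  revert r; decide

theorem count_add_mem_diagPattern (c : ZMod 13) (a : ℕ) :
    Nat.count (fun x => (x : ZMod 13) + c ∈ diagPattern) (13 * a) = 9 * a := by
  have hperiod : Function.Periodic (fun x : ℕ => (x : ZMod 13) + c ∈ diagPattern) 13 := by
    intro x
    simp only [Nat.cast_add, Nat.cast_ofNat, show (13 : ZMod 13) = 0 from rfl, add_zero]
  have hcount13 : ∀ c : ZMod 13,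
      Nat.count (fun x => (x : ZMod 13) + c ∈ diagPattern) 13 = 9 := by decide
  rw [Nat.count_mul_of_periodic hperiod, hcount13, mul_comm]

def patternBlock (m : ℕ) : Finset (ℕ × ℕ) :=
  (Finset.range m ×ˢ Finset.range m).filter (diagColour · ∈ diagPattern)

theorem card_patternBlock (a : ℕ) : (patternBlock (13 * a)).card = 117 * a ^ 2 := by
  rw [patternBlock, Finset.card_filter, Finset.sum_product_right]
  have hrow (y : ℕ) : ∑ x ∈ Finset.range (13 * a),
      (if diagColour (x, y) ∈ diagPattern then 1 else 0) = 9 * a := by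
    rw [← Finset.card_filter, ← Nat.count_eq_card_filter_range]
    exact count_add_mem_diagPattern (5 * y) a
  simp only [hrow, Finset.sum_const, Finset.card_range, smul_eq_mul]
  ring

def torusCoords (n : ℕ) (v : ∀ _ : Fin 2, ZMod n) : ℕ × ℕ := ((v 0).val, (v 1).val)

theorem torusCoords_injective (n : ℕ) [NeZero n] : (torusCoords n).Injective := by
  intro v w h
  simp only [torusCoords, Prod.mk.injEq] at h
  funext i
  fin_cases i
  exacts [ZMod.val_injective n h.1, ZMod.val_injective n h.2]

def patternSet (n m : ℕ) : Set (∀ _ : Fin 2, ZMod n) := torusCoords n ⁻¹' patternBlock m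

theorem ncard_patternSet {n m : ℕ} (hm : m ≤ n) :
    (patternSet n m).ncard = (patternBlock m).card := by
  rcases Nat.eq_zero_or_pos m with rfl | hm0
  · simp [patternSet, patternBlock]
  have : NeZero n := ⟨by omega⟩
  rw [patternSet, Set.ncard_preimage_of_injective_subset_range (torusCoords_injective n),
    Set.ncard_coe_finset]
  rintro ⟨x, y⟩ hxy
  simp only [patternBlock, Finset.coe_filter, Finset.mem_product, Finset.mem_range,
    Set.mem_ofPred_eq] at hxy
  refine ⟨![(x : ZMod n), (y : ZMod n)], ?_⟩
  simp [torusCoords, ZMod.val_cast_of_lt (hxy.1.1.trans_le hm),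
    ZMod.val_cast_of_lt (hxy.1.2.trans_le hm)]

theorem isKDependent_patternSet {n m : ℕ} (hm : m < n) :
    IsKDependent (torusGraph 2 fun _ => n) 5 (patternSet n m) := by
  have : NeZero n := ⟨by omega⟩
  intro v hv
  simp only [patternSet, patternBlock, Finset.coe_filter, Finset.mem_product,
    Finset.mem_range, Set.mem_preimage, Set.mem_ofPred_eq, torusCoords] at hv
  obtain ⟨⟨hv0, hv1⟩, hvp⟩ := hv
  let disp (w : ∀ _ : Fin 2, ZMod n) : ℤ × ℤ :=
    ((w 0).val - (v 0).val, (w 1).val - (v 1).val)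
  refine (Set.ncard_le_ncard_of_injOn disp ?_ ?_ (Finset.finite_toSet _)).trans
    ((Set.ncard_coe_finset _).trans_le (card_kingMoves_filter_le hvp))
  · rintro w ⟨hw, hne, hadj⟩
    simp only [patternSet, patternBlock, Finset.coe_filter, Finset.mem_product,
      Finset.mem_range, Set.mem_preimage, Set.mem_ofPred_eq, torusCoords] at hw
    obtain ⟨⟨hw0, hw1⟩, hwp⟩ := hw
    have h0 := abs_le.mp (ZMod.abs_val_sub_val_le_one (by omega) (by omega) (hadj 0))
    have h1 := abs_le.mp (ZMod.abs_val_sub_val_le_one (by omega) (by omega) (hadj 1))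
    simp only [kingMoves, Finset.coe_filter, Finset.mem_erase, Finset.mem_product,
      Finset.mem_insert, Finset.mem_singleton, Set.mem_ofPred_eq, disp]
    refine ⟨⟨fun h => hne ?_, by omega, by omega⟩, ?_⟩
    · simp only [Prod.mk_eq_zero, sub_eq_zero, Nat.cast_inj] at h
      exact torusCoords_injective n (Prod.ext h.1.symm h.2.symm)
    · convert hwp using 1
      simp only [diagColour]
      push_cast
      ring
  · intro w _ w' _ h
    simp only [disp, Prod.mk.injEq, sub_left_inj, Nat.cast_inj] at h
    exact torusCoords_injective n (Prod.ext h.1 h.2)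

theorem le_betaK_torusGraph_two {n : ℕ} (hn : 0 < n) :
    117 * ((n - 1) / 13) ^ 2 ≤ betaK (torusGraph 2 fun _ => n) 5 := by
  have : NeZero n := ⟨hn.ne'⟩
  have hm : 13 * ((n - 1) / 13) < n := by omega
  calc 117 * ((n - 1) / 13) ^ 2 = (patternBlock (13 * ((n - 1) / 13))).card :=
        (card_patternBlock _).symm
    _ = (patternSet n _).ncard := (ncard_patternSet hm.le).symm
    _ ≤ _ := le_betaK_of_isKDependent (isKDependent_patternSet hm)

theorem le_betaK_torusGraph_two_div_sq {n : ℕ} (hn : 13 ≤ n) :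
    9 / 13 * (1 - 13 / (n : ℝ)) ^ 2 ≤ (betaK (torusGraph 2 fun _ => n) 5 : ℝ) / n ^ 2 := by
  have hn' : (13 : ℝ) ≤ n := by exact_mod_cast hn
  have ha : (n : ℝ) - 13 ≤ 13 * ((n - 1) / 13 : ℕ) := by
    have : n ≤ 13 * ((n - 1) / 13) + 13 := by omega
    have : (n : ℝ) ≤ 13 * ((n - 1) / 13 : ℕ) + 13 := by exact_mod_cast this
    linarith
  have hbeta : (117 * ((n - 1) / 13 : ℕ) ^ 2 : ℝ) ≤ betaK (torusGraph 2 fun _ => n) 5 := by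
    exact_mod_cast le_betaK_torusGraph_two (by omega)
  rw [show 9 / 13 * (1 - 13 / (n : ℝ)) ^ 2 = 9 / 13 * (n - 13) ^ 2 / n ^ 2 by
    field_simp]
  gcongr
  nlinarith

theorem betaK_torusGraph_two_div_sq_le_one {n : ℕ} (hn : 0 < n) :
    (betaK (torusGraph 2 fun _ => n) 5 : ℝ) / n ^ 2 ≤ 1 := by
  have : NeZero n := ⟨hn.ne'⟩
  have hcard := betaK_le_card (torusGraph 2 fun _ => n) 5
  rw [Nat.card_pi, Finset.prod_const, Nat.card_zmod, Finset.card_univ, Fintype.card_fin]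
    at hcard
  rw [div_le_one (by positivity)]
  exact_mod_cast hcard

/-- τ_5^(2) ≥ 9/13. -/
theorem stmt_6 :
    (9 : ℝ)/13 ≤ Filter.liminf
      (fun n : ℕ => (betaK (torusGraph 2 (fun _ => n)) 5 : ℝ) / (n : ℝ) ^ 2)
      Filter.atTop := by
  have hlim : Tendsto (fun n : ℕ => 9 / 13 * (1 - 13 / (n : ℝ)) ^ 2) atTop (𝓝 (9 / 13)) := by
    simpa using ((tendsto_const_div_atTop_nhds_zero_nat 13).const_sub 1).pow 2 |>.const_mul
      (9 / 13 : ℝ)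
  refine le_liminf_of_tendsto_of_eventually_le hlim ?_ ⟨1, eventually_map.mpr ?_⟩
  · filter_upwards [eventually_ge_atTop 13] with n hn
    exact le_betaK_torusGraph_two_div_sq hn
  · filter_upwards [eventually_gt_atTop 0] with n hn
    exact betaK_torusGraph_two_div_sq_le_one hn
end
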